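/- Let G be the closed upper half-space in ℝ^d, ψ : (a,b) → (0,∞), m ≥ 1, and let L be the Hestenes reflection extension operator. Then L maps S[m,G,ψ] boundedly into S[m,ℝ^d,ψ]: there is a finite constant K = K(d,m) such that ‖Lf‖_{S[m,ℝ^d,ψ]} ≤ K · ‖f‖_{S[m,G,ψ]} for all f ∈ S[m,G,ψ], and Lf = f on G. -/

import Mathlib

open MeasureTheory ENNReal

/-- Partial derivative in direction `i`. -/
noncomputable def pDeriv {d : ℕ} (i : Fin d) (f : (Fin d → ℝ) → ℝ) :
    (Fin d → ℝ) → ℝ :=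
  fun x => fderiv ℝ f x (Pi.single i 1)

/-- Multi-index derivative `D^α f = ∂^{α_1}_{x_1} ⋯ ∂^{α_d}_{x_d} f`. -/
noncomputable def multiDeriv {d : ℕ} (α : Fin d → ℕ) (f : (Fin d → ℝ) → ℝ) :
    (Fin d → ℝ) → ℝ :=
  (List.ofFn fun i : Fin d => (pDeriv i)^[α i]).foldr (· ∘ ·) id f

/-- Sobolev norm `‖f‖_{W^m_p(G)} = max_{|α| ≤ m} ‖D^α f‖_{L^p(G)}` (in `ℝ≥0∞`). -/
noncomputable def sobolevNorm {d : ℕ} (m : ℕ) (p : ℝ) (G : Set (Fin d → ℝ))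
    (f : (Fin d → ℝ) → ℝ) : ℝ≥0∞ :=
  ⨆ (α : Fin d → ℕ) (_ : ∑ i, α i ≤ m),
    eLpNorm (multiDeriv α f) (ENNReal.ofReal p) (volume.restrict G)

/-- Sobolev–Grand Lebesgue norm
`‖f‖_{S[m,G,ψ]} = sup_{p ∈ (a,b)} ‖f‖_{W^m_p(G)} / ψ(p)`. -/
noncomputable def sglsNorm {d : ℕ} (m : ℕ) (G : Set (Fin d → ℝ)) (a : ℝ) (b : ℝ≥0∞)
    (ψ : ℝ → ℝ) (f : (Fin d → ℝ) → ℝ) : ℝ≥0∞ :=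
  ⨆ (p : ℝ) (_ : a < p ∧ ENNReal.ofReal p < b),
    sobolevNorm m p G f / ENNReal.ofReal (ψ p)

/-- The Hestenes reflection extension operator: `Lf(x̃, x_d) = f(x̃, x_d)` for `x_d ≥ 0`
and `Lf(x̃, x_d) = ∑_{k=1}^{m+1} c_k f(x̃, -k x_d)` for `x_d < 0` (here `c : Fin (m+1) → ℝ`,
`c k` standing for `c_{k+1}`). -/
noncomputable def hestenes {d m : ℕ} (c : Fin (m + 1) → ℝ)
    (f : (Fin (d + 1) → ℝ) → ℝ) (x : Fin (d + 1) → ℝ) : ℝ :=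
  if 0 ≤ x (Fin.last d) then f x
  else ∑ k : Fin (m + 1),
    c k * f (Function.update x (Fin.last d) (-((k : ℕ) + 1 : ℝ) * x (Fin.last d)))

set_option maxHeartbeats 1000000
section AuxHestenes


/-- The diagonal scaling map. -/
noncomputable def Lsig {n : ℕ} (σ : Fin n → ℝ) : (Fin n → ℝ) →L[ℝ] (Fin n → ℝ) :=
  ContinuousLinearMap.pi (fun i => σ i • ContinuousLinearMap.proj i)

lemma Lsig_apply {n : ℕ} (σ : Fin n → ℝ) (x : Fin n → ℝ) (i : Fin n) :
    Lsig σ x i = σ i * x i := rfl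

lemma contDiff_pDeriv {n : ℕ} (i : Fin n) {g : (Fin n → ℝ) → ℝ}
    (hg : ContDiff ℝ (⊤ : ℕ∞) g) : ContDiff ℝ (⊤ : ℕ∞) (pDeriv i g) :=
  (hg.fderiv_right (mod_cast le_top)).clm_apply contDiff_const

lemma pDeriv_sum {n N : ℕ} (i : Fin n) (cc : Fin N → ℝ) (gg : Fin N → (Fin n → ℝ) → ℝ)
    (hgg : ∀ k, ContDiff ℝ (⊤ : ℕ∞) (gg k)) :
    pDeriv i (fun y => ∑ k, cc k * gg k y) = fun y => ∑ k, cc k * pDeriv i (gg k) y := by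
  funext x
  have hdiff : ∀ k : Fin N, k ∈ Finset.univ →
      DifferentiableAt ℝ (fun y => cc k * gg k y) x :=
    fun k _ => (((hgg k).differentiable (by simp) x).const_mul (cc k))
  simp only [pDeriv]
  rw [fderiv_fun_sum hdiff]
  rw [ContinuousLinearMap.sum_apply]
  congr 1
  funext k
  rw [fderiv_const_mul ((hgg k).differentiable (by simp) x) (cc k)]
  rfl

lemma pDeriv_comp_Lsig {n : ℕ} (i : Fin n) (σ : Fin n → ℝ) {g : (Fin n → ℝ) → ℝ}
    (hg : ContDiff ℝ (⊤ : ℕ∞) g) :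
    pDeriv i (fun y => g (Lsig σ y)) = fun y => σ i * pDeriv i g (Lsig σ y) := by
  funext x
  simp only [pDeriv]
  have h1 : fderiv ℝ (fun y => g (Lsig σ y)) x
      = (fderiv ℝ g (Lsig σ x)).comp (Lsig σ : (Fin n → ℝ) →L[ℝ] (Fin n → ℝ)) := by
    have := fderiv_comp (f := (Lsig σ : (Fin n → ℝ) → (Fin n → ℝ))) (g := g)
      (x := x) ((hg.differentiable (by simp)) _) ((Lsig σ).differentiableAt)
    rw [(Lsig σ).fderiv] at this
    exact this
  rw [h1]
  have h2 : (Lsig σ) (Pi.single i 1) = σ i • (Pi.single i 1 : Fin n → ℝ) := by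
    funext j
    rw [Lsig_apply]
    by_cases h : j = i
    · subst h; simp
    · simp [Pi.single_apply, h]
  rw [ContinuousLinearMap.comp_apply, h2, (fderiv ℝ g (Lsig σ x)).map_smul, smul_eq_mul]

def GoodOp {n : ℕ} (σ : Fin n → ℝ)
    (T : ((Fin n → ℝ) → ℝ) → ((Fin n → ℝ) → ℝ)) (s : ℝ) : Prop :=
  (∀ g, ContDiff ℝ (⊤ : ℕ∞) g → ContDiff ℝ (⊤ : ℕ∞) (T g)) ∧
  (∀ (N : ℕ) (cc : Fin N → ℝ) (gg : Fin N → (Fin n → ℝ) → ℝ),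
    (∀ k, ContDiff ℝ (⊤ : ℕ∞) (gg k)) →
    T (fun y => ∑ k, cc k * gg k y) = fun y => ∑ k, cc k * T (gg k) y) ∧
  (∀ g, ContDiff ℝ (⊤ : ℕ∞) g →
    T (fun y => g (Lsig σ y)) = fun y => s * T g (Lsig σ y))

lemma goodOp_id {n : ℕ} (σ : Fin n → ℝ) : GoodOp σ id 1 := by
  refine ⟨fun g hg => hg, fun N cc gg _ => rfl, fun g _ => ?_⟩
  funext y; simp

lemma goodOp_comp {n : ℕ} {σ : Fin n → ℝ} {T₁ T₂ : ((Fin n → ℝ) → ℝ) → ((Fin n → ℝ) → ℝ)}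
    {s₁ s₂ : ℝ} (h₁ : GoodOp σ T₁ s₁) (h₂ : GoodOp σ T₂ s₂) :
    GoodOp σ (T₁ ∘ T₂) (s₁ * s₂) := by
  obtain ⟨h1s, h1l, h1c⟩ := h₁
  obtain ⟨h2s, h2l, h2c⟩ := h₂
  refine ⟨fun g hg => h1s _ (h2s g hg), ?_, ?_⟩
  · intro N cc gg hgg
    simp only [Function.comp_apply]
    rw [h2l N cc gg hgg, h1l N cc (fun k => T₂ (gg k)) (fun k => h2s _ (hgg k))]
  · intro g hg
    simp only [Function.comp_apply]
    rw [h2c g hg]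
    have hTg : ContDiff ℝ (⊤ : ℕ∞) (T₂ g) := h2s g hg
    have hcomp : ContDiff ℝ (⊤ : ℕ∞) (fun y => T₂ g (Lsig σ y)) := hTg.comp (Lsig σ).contDiff
    have h1 : T₁ (fun y => ∑ _k : Fin 1, s₂ * (fun y => T₂ g (Lsig σ y)) y)
        = fun y => ∑ _k : Fin 1, s₂ * T₁ (fun y => T₂ g (Lsig σ y)) y :=
      h1l 1 (fun _ => s₂) (fun _ => fun y => T₂ g (Lsig σ y)) (fun _ => hcomp)
    simp only [Finset.sum_const, Finset.card_univ, Fintype.card_fin, one_smul] at h1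
    rw [show (fun y => s₂ * T₂ g (Lsig σ y)) = (fun y => s₂ * (fun y => T₂ g (Lsig σ y)) y) from rfl,
      h1, h1c (T₂ g) hTg]
    funext y; ring

lemma goodOp_iterate {n : ℕ} {σ : Fin n → ℝ}
    {T : ((Fin n → ℝ) → ℝ) → ((Fin n → ℝ) → ℝ)} {s : ℝ} (h : GoodOp σ T s) :
    ∀ k : ℕ, GoodOp σ (T^[k]) (s ^ k) := by
  intro k
  induction k with
  | zero => simpa using goodOp_id σ
  | succ k ih =>
    rw [Function.iterate_succ', pow_succ']
    exact goodOp_comp h ih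

lemma goodOp_foldr {n : ℕ} {σ : Fin n → ℝ}
    {Ts : List (((Fin n → ℝ) → ℝ) → ((Fin n → ℝ) → ℝ))} {cs : List ℝ}
    (h : List.Forall₂ (GoodOp σ) Ts cs) :
    GoodOp σ (Ts.foldr (· ∘ ·) id) cs.prod := by
  induction h with
  | nil => simpa using goodOp_id σ
  | cons h _ ih =>
    simp only [List.foldr_cons, List.prod_cons]
    exact goodOp_comp h ih

lemma forall₂_ofFn {β γ : Type*} (P : β → γ → Prop) :
    ∀ {n : ℕ} (f : Fin n → β) (g : Fin n → γ), (∀ i, P (f i) (g i)) →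
      List.Forall₂ P (List.ofFn f) (List.ofFn g) := by
  intro n
  induction n with
  | zero => intro f g _; simp
  | succ n ih =>
    intro f g h
    rw [List.ofFn_succ, List.ofFn_succ]
    exact List.Forall₂.cons (h 0) (ih _ _ (fun i => h i.succ))

/-- Locality of operators built from derivatives. -/
def LocOp {n : ℕ} (U : Set (Fin n → ℝ))
    (T : ((Fin n → ℝ) → ℝ) → ((Fin n → ℝ) → ℝ)) : Prop :=
  ∀ g h : (Fin n → ℝ) → ℝ, (∀ x ∈ U, g x = h x) → ∀ x ∈ U, T g x = T h x

lemma locOp_pDeriv {n : ℕ} {U : Set (Fin n → ℝ)} (hU : IsOpen U) (i : Fin n) :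
    LocOp U (pDeriv i) := by
  intro g h hgh x hx
  simp only [pDeriv]
  have : g =ᶠ[nhds x] h :=
    Filter.eventually_of_mem (hU.mem_nhds hx) hgh
  rw [this.fderiv_eq]

lemma locOp_id {n : ℕ} (U : Set (Fin n → ℝ)) : LocOp U id := fun _ _ h => h

lemma locOp_comp {n : ℕ} {U : Set (Fin n → ℝ)}
    {T₁ T₂ : ((Fin n → ℝ) → ℝ) → ((Fin n → ℝ) → ℝ)}
    (h₁ : LocOp U T₁) (h₂ : LocOp U T₂) : LocOp U (T₁ ∘ T₂) :=
  fun g h hgh => h₁ _ _ (h₂ g h hgh)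

lemma locOp_iterate {n : ℕ} {U : Set (Fin n → ℝ)}
    {T : ((Fin n → ℝ) → ℝ) → ((Fin n → ℝ) → ℝ)} (h : LocOp U T) (k : ℕ) :
    LocOp U (T^[k]) := by
  induction k with
  | zero => exact locOp_id U
  | succ k ih => rw [Function.iterate_succ']; exact locOp_comp h ih

lemma locOp_foldr {n : ℕ} {U : Set (Fin n → ℝ)}
    {Ts : List (((Fin n → ℝ) → ℝ) → ((Fin n → ℝ) → ℝ))}
    (h : ∀ T ∈ Ts, LocOp U T) : LocOp U (Ts.foldr (· ∘ ·) id) := by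
  induction Ts with
  | nil => exact locOp_id U
  | cons T Ts ih =>
    simp only [List.foldr_cons]
    exact locOp_comp (h T List.mem_cons_self) (ih fun T' hT' => h T' (List.mem_cons_of_mem _ hT'))

lemma multiDeriv_congr_on {n : ℕ} {U : Set (Fin n → ℝ)} (hU : IsOpen U)
    (α : Fin n → ℕ) {g h : (Fin n → ℝ) → ℝ} (hgh : ∀ x ∈ U, g x = h x) :
    ∀ x ∈ U, multiDeriv α g x = multiDeriv α h x := by
  have : LocOp U ((List.ofFn fun i : Fin n => (pDeriv i)^[α i]).foldr (· ∘ ·) id) := by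
    apply locOp_foldr
    intro T hT
    rw [List.mem_ofFn] at hT
    obtain ⟨i, rfl⟩ := hT
    exact locOp_iterate (locOp_pDeriv hU i) (α i)
  exact this g h hgh

lemma goodOp_pDeriv {n : ℕ} (σ : Fin n → ℝ) (i : Fin n) : GoodOp σ (pDeriv i) (σ i) :=
  ⟨fun _ hg => contDiff_pDeriv i hg, fun N cc gg hgg => pDeriv_sum i cc gg hgg,
   fun _ hg => pDeriv_comp_Lsig i σ hg⟩

lemma goodOp_multiDeriv {n : ℕ} (σ : Fin n → ℝ) (α : Fin n → ℕ) :
    GoodOp σ ((List.ofFn fun i : Fin n => (pDeriv i)^[α i]).foldr (· ∘ ·) id)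
      (∏ i, σ i ^ α i) := by
  have h := goodOp_foldr (σ := σ)
    (forall₂_ofFn (GoodOp σ) (fun i : Fin n => (pDeriv i)^[α i])
      (fun i => σ i ^ α i) (fun i => goodOp_iterate (goodOp_pDeriv σ i) (α i)))
  rwa [List.prod_ofFn] at h

lemma contDiff_multiDeriv {n : ℕ} (α : Fin n → ℕ) {g : (Fin n → ℝ) → ℝ}
    (hg : ContDiff ℝ (⊤ : ℕ∞) g) : ContDiff ℝ (⊤ : ℕ∞) (multiDeriv α g) :=
  (goodOp_multiDeriv (fun _ => 1) α).1 g hg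

lemma multiDeriv_sum {n N : ℕ} (α : Fin n → ℕ) (cc : Fin N → ℝ)
    (gg : Fin N → (Fin n → ℝ) → ℝ) (hgg : ∀ k, ContDiff ℝ (⊤ : ℕ∞) (gg k)) :
    multiDeriv α (fun y => ∑ k, cc k * gg k y)
      = fun y => ∑ k, cc k * multiDeriv α (gg k) y :=
  (goodOp_multiDeriv (fun _ => 1) α).2.1 N cc gg hgg

lemma multiDeriv_comp_Lsig {n : ℕ} (σ : Fin n → ℝ) (α : Fin n → ℕ)
    {g : (Fin n → ℝ) → ℝ} (hg : ContDiff ℝ (⊤ : ℕ∞) g) :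
    multiDeriv α (fun y => g (Lsig σ y))
      = fun y => (∏ i, σ i ^ α i) * multiDeriv α g (Lsig σ y) :=
  (goodOp_multiDeriv σ α).2.2 g hg

lemma eLpNorm_add_measure_le' {n : ℕ} (f : (Fin n → ℝ) → ℝ) {q : ℝ≥0∞}
    (hq1 : 1 ≤ q) (hqt : q ≠ ⊤) (μ ν : Measure (Fin n → ℝ)) :
    eLpNorm f q (μ + ν) ≤ eLpNorm f q μ + eLpNorm f q ν := by
  have hq0 : q ≠ 0 := fun h => by simp [h] at hq1
  rw [eLpNorm_eq_lintegral_rpow_enorm_toReal hq0 hqt, eLpNorm_eq_lintegral_rpow_enorm_toReal hq0 hqt,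
    eLpNorm_eq_lintegral_rpow_enorm_toReal hq0 hqt, lintegral_add_measure]
  have hr : (0:ℝ) < q.toReal := ENNReal.toReal_pos hq0 hqt
  have h1 : 1 / q.toReal ≤ 1 := by
    rw [div_le_one hr]
    exact ENNReal.toReal_one ▸ ENNReal.toReal_mono hqt hq1
  exact ENNReal.rpow_add_le_add_rpow _ _ (by positivity) h1

/-- determinant computation for `Lsig`. -/
lemma map_Lsig_volume {n : ℕ} (σ : Fin n → ℝ) (hσ : ∏ i, σ i ≠ 0) :
    Measure.map (Lsig σ) volume = ENNReal.ofReal |(∏ i, σ i)⁻¹| • volume := by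
  classical
  have hlin : (Lsig σ : (Fin n → ℝ) → (Fin n → ℝ))
      = ⇑(Matrix.toLin' (Matrix.diagonal σ)) := by
    funext x
    funext i
    rw [Lsig_apply, Matrix.toLin'_apply, Matrix.mulVec_diagonal]
  have hdet : LinearMap.det (Matrix.toLin' (Matrix.diagonal σ)) = ∏ i, σ i := by
    rw [LinearMap.det_toLin', Matrix.det_diagonal]
  rw [hlin, ← hdet]
  rw [← hdet] at hσ
  exact Real.map_linearMap_volume_pi_eq_smul_volume_pi hσ

/-- change of variables bound. -/
lemma eLpNorm_comp_Lsig_le {n : ℕ} (j : Fin n) (t : ℝ) (ht : t ≤ -1)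
    (g : (Fin n → ℝ) → ℝ) (hg : Continuous g) (q : ℝ≥0∞) :
    eLpNorm (fun x => g (Lsig (fun i => if i = j then t else 1) x)) q
        (volume.restrict {x : Fin n → ℝ | x j < 0})
      ≤ eLpNorm g q (volume.restrict {x : Fin n → ℝ | 0 ≤ x j}) := by
  classical
  set σ : Fin n → ℝ := fun i => if i = j then t else 1 with hσdef
  have htneg : t < 0 := lt_of_le_of_lt ht (by norm_num)
  have hprod : ∏ i, σ i = t := by
    rw [hσdef]
    rw [Finset.prod_ite_eq' Finset.univ j (fun _ => t)]
    simp
  have hV : MeasurableSet {x : Fin n → ℝ | 0 < x j} :=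
    (isOpen_lt continuous_const (continuous_apply j)).measurableSet
  have hpre : (Lsig σ) ⁻¹' {x : Fin n → ℝ | 0 < x j} = {x : Fin n → ℝ | x j < 0} := by
    ext x
    have hj : σ j = t := if_pos rfl
    simp only [Set.mem_preimage, Set.mem_setOf_eq, Lsig_apply, hj]
    constructor
    · intro h
      by_contra hx
      push_neg at hx
      nlinarith
    · intro h
      nlinarith
  have hmeas : Measurable (Lsig σ) := (Lsig σ).continuous.measurable
  have h1 : eLpNorm (fun x => g (Lsig σ x)) q (volume.restrict {x : Fin n → ℝ | x j < 0})
      = eLpNorm g q ((Measure.map (Lsig σ) volume).restrict {x : Fin n → ℝ | 0 < x j}) := by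
    rw [Measure.restrict_map hmeas hV, hpre]
    rw [eLpNorm_map_measure (hg.aestronglyMeasurable) hmeas.aemeasurable]
    rfl
  rw [h1, map_Lsig_volume σ (hprod ▸ htneg.ne), Measure.restrict_smul]
  have hc : ENNReal.ofReal |(∏ i, σ i)⁻¹| ≤ 1 := by
    rw [hprod, abs_inv]
    have h1t : (1:ℝ) ≤ |t| := by
      rw [abs_of_neg htneg]; linarith
    refine ENNReal.ofReal_le_one.2 ?_
    rw [inv_le_one_iff₀]
    right; linarith
  have hsmul : (ENNReal.ofReal |(∏ i, σ i)⁻¹| • volume.restrict {x : Fin n → ℝ | 0 < x j})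
      ≤ volume.restrict {x : Fin n → ℝ | 0 ≤ x j} := by
    refine Measure.le_iff.2 fun s hs => ?_
    rw [Measure.smul_apply, Measure.restrict_apply hs, Measure.restrict_apply hs, smul_eq_mul]
    calc ENNReal.ofReal |(∏ i, σ i)⁻¹| * volume (s ∩ {x : Fin n → ℝ | 0 < x j})
        ≤ 1 * volume (s ∩ {x : Fin n → ℝ | 0 < x j}) := mul_le_mul_left hc _
      _ = volume (s ∩ {x : Fin n → ℝ | 0 < x j}) := one_mul _
      _ ≤ volume (s ∩ {x : Fin n → ℝ | 0 ≤ x j}) :=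
          measure_mono (Set.inter_subset_inter_right s (fun x hx => le_of_lt (Set.mem_setOf_eq ▸ hx)))
  exact eLpNorm_mono_measure g hsmul

/-! ### Hestenes-specific auxiliary lemmas -/

/-- The scaling vector for the `k`-th reflection. -/
noncomputable def hesSigma (m d : ℕ) (k : Fin (m + 1)) : Fin (d + 1) → ℝ :=
  fun i => if i = Fin.last d then -((k : ℕ) + 1 : ℝ) else 1

lemma hesSigma_update {m d : ℕ} (k : Fin (m + 1)) (x : Fin (d + 1) → ℝ) :
    Function.update x (Fin.last d) (-((k : ℕ) + 1 : ℝ) * x (Fin.last d))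
      = Lsig (hesSigma m d k) x := by
  funext i
  by_cases h : i = Fin.last d
  · subst h
    rw [Function.update_self, Lsig_apply, hesSigma, if_pos rfl]
  · rw [Function.update_of_ne h, Lsig_apply, hesSigma, if_neg h, one_mul]

lemma prod_hesSigma_pow {m d : ℕ} (k : Fin (m + 1)) (α : Fin (d + 1) → ℕ) :
    ∏ i, hesSigma m d k i ^ α i = (-((k : ℕ) + 1 : ℝ)) ^ α (Fin.last d) := by
  rw [Finset.prod_eq_single (Fin.last d)
    (fun i _ hij => by rw [hesSigma, if_neg hij, one_pow])
    (fun h => absurd (Finset.mem_univ _) h)]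
  rw [hesSigma, if_pos rfl]

lemma multiDeriv_hestenes_on_U {d m : ℕ} (c : Fin (m + 1) → ℝ)
    (f : (Fin (d + 1) → ℝ) → ℝ) (hf : ContDiff ℝ (⊤ : ℕ∞) f) (α : Fin (d + 1) → ℕ) :
    ∀ x ∈ {x : Fin (d + 1) → ℝ | x (Fin.last d) < 0},
      multiDeriv α (hestenes c f) x
        = ∑ k : Fin (m + 1), (c k * (-((k : ℕ) + 1 : ℝ)) ^ α (Fin.last d))
            * multiDeriv α f (Lsig (hesSigma m d k) x) := by
  intro x hx
  have hUopen : IsOpen {x : Fin (d + 1) → ℝ | x (Fin.last d) < 0} :=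
    isOpen_lt (continuous_apply _) continuous_const
  have hgg : ∀ k : Fin (m + 1), ContDiff ℝ (⊤ : ℕ∞) (fun y => f (Lsig (hesSigma m d k) y)) :=
    fun k => hf.comp (Lsig (hesSigma m d k)).contDiff
  have hhestF : ∀ y ∈ {x : Fin (d + 1) → ℝ | x (Fin.last d) < 0},
      hestenes c f y = (fun y => ∑ k : Fin (m + 1), c k * f (Lsig (hesSigma m d k) y)) y := by
    intro y hy
    have hy' : ¬ (0 : ℝ) ≤ y (Fin.last d) := not_le.2 hy
    simp only [hestenes, if_neg hy']
    exact Finset.sum_congr rfl fun k _ => by rw [hesSigma_update k y]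
  have h1 := multiDeriv_congr_on hUopen α hhestF x hx
  rw [h1, multiDeriv_sum α c (fun k y => f (Lsig (hesSigma m d k) y)) hgg]
  refine Finset.sum_congr rfl fun k _ => ?_
  have h2 := multiDeriv_comp_Lsig (hesSigma m d k) α hf
  calc c k * multiDeriv α (fun y => f (Lsig (hesSigma m d k) y)) x
      = c k * ((∏ i, hesSigma m d k i ^ α i) * multiDeriv α f (Lsig (hesSigma m d k) x)) := by
        rw [h2]
    _ = _ := by rw [prod_hesSigma_pow k α]; ring

/-- The key per-multi-index estimate. -/
lemma eLpNorm_multiDeriv_hestenes_le {d m : ℕ} (c : Fin (m + 1) → ℝ)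
    (f : (Fin (d + 1) → ℝ) → ℝ) (hf : ContDiff ℝ (⊤ : ℕ∞) f) (α : Fin (d + 1) → ℕ)
    (hαm : α (Fin.last d) ≤ m) {q : ℝ≥0∞} (hq1 : 1 ≤ q) (hqt : q ≠ ⊤) :
    eLpNorm (multiDeriv α (hestenes c f)) q volume
      ≤ (1 + ∑ k : Fin (m + 1), ENNReal.ofReal (|c k| * ((m : ℝ) + 1) ^ m))
          * eLpNorm (multiDeriv α f) q
              (volume.restrict {x : Fin (d + 1) → ℝ | 0 ≤ x (Fin.last d)}) := by
  classical
  set G : Set (Fin (d + 1) → ℝ) := {x | 0 ≤ x (Fin.last d)} with hGdef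
  set U : Set (Fin (d + 1) → ℝ) := {x | x (Fin.last d) < 0} with hUdef
  have hGmeas : MeasurableSet G :=
    (isClosed_le continuous_const (continuous_apply _)).measurableSet
  have hUopen : IsOpen U := isOpen_lt (continuous_apply _) continuous_const
  have hVopen : IsOpen {x : Fin (d + 1) → ℝ | 0 < x (Fin.last d)} :=
    isOpen_lt continuous_const (continuous_apply _)
  have hgα : Continuous (multiDeriv α f) := (contDiff_multiDeriv α hf).continuous
  have hsplit : volume.restrict G + volume.restrict U = (volume : Measure (Fin (d + 1) → ℝ)) := by
    have hUc : U = Gᶜ := by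
      ext x; simp [hUdef, hGdef, not_le]
    rw [hUc]
    exact Measure.restrict_add_restrict_compl hGmeas
  -- the part on G
  have hGpart : eLpNorm (multiDeriv α (hestenes c f)) q (volume.restrict G)
      = eLpNorm (multiDeriv α f) q (volume.restrict G) := by
    apply eLpNorm_congr_ae
    rw [Filter.EventuallyEq, ae_iff, Measure.restrict_apply' hGmeas]
    refine measure_mono_null (t := {x : Fin (d + 1) → ℝ | x (Fin.last d) = 0}) (fun x hx => ?_) ?_
    · obtain ⟨hne, hxG⟩ := hx
      show x (Fin.last d) = 0
      by_contra hx0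
      have hxpos : 0 < x (Fin.last d) := lt_of_le_of_ne hxG (Ne.symm hx0)
      have heqV : ∀ y ∈ {x : Fin (d + 1) → ℝ | 0 < x (Fin.last d)},
          hestenes c f y = f y := by
        intro y hy
        have hy' : (0:ℝ) < y (Fin.last d) := hy
        simp only [hestenes, if_pos (le_of_lt hy')]
      exact hne (multiDeriv_congr_on hVopen α heqV x hxpos)
    · have hvol : (volume : Measure (Fin (d + 1) → ℝ)) = Measure.pi fun _ => volume :=
        MeasureTheory.volume_pi
      rw [hvol]
      exact Measure.pi_hyperplane (fun _ => volume) (Fin.last d) 0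
  -- the part on U
  have hUmeas : MeasurableSet U := hUopen.measurableSet
  have hrepr : ∀ᵐ x ∂(volume.restrict U), multiDeriv α (hestenes c f) x
      = (∑ k : Fin (m + 1), fun x => (c k * (-((k : ℕ) + 1 : ℝ)) ^ α (Fin.last d))
            * multiDeriv α f (Lsig (hesSigma m d k) x)) x := by
    refine Filter.eventually_of_mem (self_mem_ae_restrict hUmeas) fun x hx => ?_
    rw [Finset.sum_apply]
    exact multiDeriv_hestenes_on_U c f hf α x hx
  have hUpart : eLpNorm (multiDeriv α (hestenes c f)) q (volume.restrict U)
      ≤ ∑ k : Fin (m + 1), ENNReal.ofReal (|c k| * ((m : ℝ) + 1) ^ m)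
          * eLpNorm (multiDeriv α f) q (volume.restrict G) := by
    rw [eLpNorm_congr_ae hrepr]
    refine le_trans (eLpNorm_sum_le (fun k _ =>
      (continuous_const.mul (hgα.comp (Lsig (hesSigma m d k)).continuous)).aestronglyMeasurable)
      hq1) ?_
    refine Finset.sum_le_sum fun k _ => ?_
    have heq : (fun x => (c k * (-((k : ℕ) + 1 : ℝ)) ^ α (Fin.last d))
          * multiDeriv α f (Lsig (hesSigma m d k) x))
        = (c k * (-((k : ℕ) + 1 : ℝ)) ^ α (Fin.last d))
            • (fun x => multiDeriv α f (Lsig (hesSigma m d k) x)) := rfl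
    rw [heq, eLpNorm_const_smul]
    have hk1 : -((k : ℕ) + 1 : ℝ) ≤ -1 := by
      have : (0 : ℝ) ≤ (k : ℕ) := Nat.cast_nonneg _
      linarith
    have hcomp : eLpNorm (fun x => multiDeriv α f (Lsig (hesSigma m d k) x)) q
        (volume.restrict U) ≤ eLpNorm (multiDeriv α f) q (volume.restrict G) := by
      have := eLpNorm_comp_Lsig_le (Fin.last d) (-((k : ℕ) + 1 : ℝ)) hk1
        (multiDeriv α f) hgα q
      rw [hUdef, hGdef]
      exact this
    have hsc : (‖c k * (-((k : ℕ) + 1 : ℝ)) ^ α (Fin.last d)‖₊ : ℝ≥0∞)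
        ≤ ENNReal.ofReal (|c k| * ((m : ℝ) + 1) ^ m) := by
      rw [← enorm_eq_nnnorm, Real.enorm_eq_ofReal_abs]
      refine ENNReal.ofReal_le_ofReal ?_
      rw [abs_mul, abs_pow, abs_neg]
      have habs : |((k : ℕ) + 1 : ℝ)| = ((k : ℕ) + 1 : ℝ) :=
        abs_of_pos (by positivity)
      rw [habs]
      refine mul_le_mul_of_nonneg_left ?_ (abs_nonneg _)
      calc ((k : ℕ) + 1 : ℝ) ^ α (Fin.last d) ≤ ((m : ℝ) + 1) ^ α (Fin.last d) := by
            have hk : ((k : ℕ) : ℝ) ≤ (m : ℝ) := by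
              exact_mod_cast Nat.lt_succ_iff.1 k.isLt
            exact pow_le_pow_left₀ (by positivity) (by linarith) _
        _ ≤ ((m : ℝ) + 1) ^ m :=
            pow_le_pow_right₀ (by linarith [Nat.cast_nonneg (α := ℝ) m]) hαm
    exact mul_le_mul' hsc hcomp
  calc eLpNorm (multiDeriv α (hestenes c f)) q volume
      = eLpNorm (multiDeriv α (hestenes c f)) q (volume.restrict G + volume.restrict U) := by
        rw [hsplit]
    _ ≤ eLpNorm (multiDeriv α (hestenes c f)) q (volume.restrict G)
        + eLpNorm (multiDeriv α (hestenes c f)) q (volume.restrict U) :=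
        eLpNorm_add_measure_le' _ hq1 hqt _ _
    _ ≤ eLpNorm (multiDeriv α f) q (volume.restrict G)
        + ∑ k : Fin (m + 1), ENNReal.ofReal (|c k| * ((m : ℝ) + 1) ^ m)
            * eLpNorm (multiDeriv α f) q (volume.restrict G) := by
        rw [hGpart]
        exact add_le_add le_rfl hUpart
    _ = _ := by
        rw [add_mul, one_mul, Finset.sum_mul]

end AuxHestenes

/-- (Theorem 2.1) The Hestenes reflection extension operator `L` maps
`S[m,G,ψ]` boundedly into `S[m,ℝ^d,ψ]`, where `G` is the closed upper half-space:
there is a finite constant `K = K(d,m)` such that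
`‖Lf‖_{S[m,ℝ^d,ψ]} ≤ K ‖f‖_{S[m,G,ψ]}` for all `f ∈ S[m,G,ψ]`, and `Lf = f` on `G`. -/
theorem hestenes_sgls_bounded {d m : ℕ} (hm : 1 ≤ m)
    (a : ℝ) (b : ℝ≥0∞) (ha : 1 ≤ a) (hab : ENNReal.ofReal a < b)
    (ψ : ℝ → ℝ) (hψ : ∀ p : ℝ, a < p → ENNReal.ofReal p < b → 0 < ψ p)
    (c : Fin (m + 1) → ℝ)
    (hc : ∀ l : ℕ, l ≤ m → ∑ k : Fin (m + 1), (-((k : ℕ) + 1 : ℝ)) ^ l * c k = 1) :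
    ∃ K : ℝ≥0∞, K < ⊤ ∧
      ∀ f : (Fin (d + 1) → ℝ) → ℝ, ContDiff ℝ (⊤ : ℕ∞) f →
        sglsNorm m {x : Fin (d + 1) → ℝ | 0 ≤ x (Fin.last d)} a b ψ f < ⊤ →
          sglsNorm m Set.univ a b ψ (hestenes c f)
              ≤ K * sglsNorm m {x : Fin (d + 1) → ℝ | 0 ≤ x (Fin.last d)} a b ψ f
            ∧
          ∀ x : Fin (d + 1) → ℝ, 0 ≤ x (Fin.last d) → hestenes c f x = f x := by
  classical
  set K : ℝ≥0∞ := 1 + ∑ k : Fin (m + 1), ENNReal.ofReal (|c k| * ((m : ℝ) + 1) ^ m) with hK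
  have hKlt : K < ⊤ := by
    rw [hK]
    refine ENNReal.add_lt_top.2 ⟨ENNReal.one_lt_top, ?_⟩
    exact ENNReal.sum_lt_top.2 fun k _ => ENNReal.ofReal_lt_top
  refine ⟨K, hKlt, fun f hf _hfin => ⟨?_, fun x hx => by simp only [hestenes, if_pos hx]⟩⟩
  refine iSup₂_le fun p hp => ?_
  have hq1 : (1 : ℝ≥0∞) ≤ ENNReal.ofReal p := by
    rw [← ENNReal.ofReal_one]
    exact ENNReal.ofReal_le_ofReal (by linarith [hp.1])
  have hqt : ENNReal.ofReal p ≠ ⊤ := ENNReal.ofReal_ne_top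
  have hsob : sobolevNorm m p Set.univ (hestenes c f)
      ≤ K * sobolevNorm m p {x : Fin (d + 1) → ℝ | 0 ≤ x (Fin.last d)} f := by
    refine iSup₂_le fun α hα => ?_
    have hαm : α (Fin.last d) ≤ m :=
      le_trans (Finset.single_le_sum (f := fun i => α i) (fun i _ => Nat.zero_le _)
        (Finset.mem_univ (Fin.last d))) hα
    rw [Measure.restrict_univ]
    refine le_trans (eLpNorm_multiDeriv_hestenes_le c f hf α hαm hq1 hqt) ?_
    rw [← hK]
    refine mul_le_mul_right ?_ K
    exact le_iSup₂ (f := fun (α : Fin (d + 1) → ℕ) (_ : ∑ i, α i ≤ m) =>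
      eLpNorm (multiDeriv α f) (ENNReal.ofReal p)
        (volume.restrict {x : Fin (d + 1) → ℝ | 0 ≤ x (Fin.last d)})) α hα
  calc sobolevNorm m p Set.univ (hestenes c f) / ENNReal.ofReal (ψ p)
      ≤ (K * sobolevNorm m p {x : Fin (d + 1) → ℝ | 0 ≤ x (Fin.last d)} f)
          / ENNReal.ofReal (ψ p) := ENNReal.div_le_div_right hsob _
    _ = K * (sobolevNorm m p {x : Fin (d + 1) → ℝ | 0 ≤ x (Fin.last d)} f
          / ENNReal.ofReal (ψ p)) := by rw [mul_div_assoc]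
    _ ≤ K * sglsNorm m {x : Fin (d + 1) → ℝ | 0 ≤ x (Fin.last d)} a b ψ f := by
        refine mul_le_mul_right ?_ K
        exact le_iSup₂ (f := fun (p : ℝ) (_ : a < p ∧ ENNReal.ofReal p < b) =>
          sobolevNorm m p {x : Fin (d + 1) → ℝ | 0 ≤ x (Fin.last d)} f
            / ENNReal.ofReal (ψ p)) p hp
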